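/- arXiv:1812.11528 — 3 statements merged into one kernel-verified Lean document; each statement's English description precedes it below -/
import Mathlib

section
/- For all i, j ∈ {1,2} and all nonnegative integers m, n, k, l, the Lie bracket of the rotational vector fields vanishes: [Θ^i_{m,n}, Θ^j_{k,l}] = 0 as a map ℝ⁴ → ℝ⁴. -/
/-- Lie bracket of vector fields on ℝ⁴: [V,W](x) = DV(x)(W(x)) − DW(x)(V(x)). -/
noncomputable def bracket (V W : (Fin 4 → ℝ) → (Fin 4 → ℝ)) : (Fin 4 → ℝ) → (Fin 4 → ℝ) :=
  fun x => fderiv ℝ V x (W x) - fderiv ℝ W x (V x)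

/-- The Eulerian vector field E₀₀(x) = x. -/
def E00 : (Fin 4 → ℝ) → (Fin 4 → ℝ) := fun x => x

/-- The rotational vector fields Θ¹₀₀(x) = (−y₁, x₁, 0, 0) and Θ²₀₀(x) = (0, 0, −y₂, x₂). -/
def Theta0 (i : Fin 2) : (Fin 4 → ℝ) → (Fin 4 → ℝ) :=
  if i = 0 then (fun x => ![-(x 1), x 0, 0, 0]) else (fun x => ![0, 0, -(x 3), x 2])

/-- Z_{m,n}(x) = (x₁² + y₁²)^m (x₂² + y₂²)^n. -/
def Z (m n : ℕ) : (Fin 4 → ℝ) → ℝ :=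
  fun x => ((x 0) ^ 2 + (x 1) ^ 2) ^ m * ((x 2) ^ 2 + (x 3) ^ 2) ^ n

/-- E_{m,n} = Z_{m,n} · E₀₀. -/
def Emn (m n : ℕ) : (Fin 4 → ℝ) → (Fin 4 → ℝ) := fun x => Z m n x • E00 x

/-- Θ^i_{m,n} = Z_{m,n} · Θ^i₀₀. -/
def Thmn (i : Fin 2) (m n : ℕ) : (Fin 4 → ℝ) → (Fin 4 → ℝ) := fun x => Z m n x • Theta0 i x

/-!
Each `Θ^i_{m,n}` is `Z_{m,n} • T_i` with `T_i` a linear rotation. For linear vector fields `A`, `B`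
the product rule gives `[f • A, g • B] = f g [A, B] + f (dg A) B - g (df B) A`. The two rotations
commute, and both preserve `x₁² + y₁²` and `x₂² + y₂²`, hence every `Z_{m,n}`; so all three terms
vanish.
-/

open ContinuousLinearMap VectorField

theorem VectorField.lieBracket_continuousLinearMap {𝕜 E : Type*} [NontriviallyNormedField 𝕜]
    [NormedAddCommGroup E] [NormedSpace 𝕜 E] (A B : E →L[𝕜] E) (x : E) :
    lieBracket 𝕜 A B x = B (A x) - A (B x) := by
  simp only [lieBracket, A.fderiv, B.fderiv]

theorem VectorField.lieBracket_smul_smul_continuousLinearMap_eq_zero {𝕜 E : Type*}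
    [NontriviallyNormedField 𝕜] [NormedAddCommGroup E] [NormedSpace 𝕜 E]
    {f g : E → 𝕜} {A B : E →L[𝕜] E} {x : E} (hf : DifferentiableAt 𝕜 f x)
    (hg : DifferentiableAt 𝕜 g x) (hAB : A (B x) = B (A x))
    (hfB : fderiv 𝕜 f x (B x) = 0) (hgA : fderiv 𝕜 g x (A x) = 0) :
    lieBracket 𝕜 (fun y => f y • A y) (fun y => g y • B y) x = 0 := by
  rw [lieBracket_smul_left hf A.differentiableAt, lieBracket_smul_right hg B.differentiableAt,
    lieBracket_continuousLinearMap, hAB]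
  simp [hfB, hgA]

theorem fderiv_pow_mul_pow_apply_eq_zero {𝕜 E : Type*} [NontriviallyNormedField 𝕜]
    [NormedAddCommGroup E] [NormedSpace 𝕜 E] {f g : E → 𝕜} {x v : E}
    (hf : DifferentiableAt 𝕜 f x) (hg : DifferentiableAt 𝕜 g x)
    (hfv : fderiv 𝕜 f x v = 0) (hgv : fderiv 𝕜 g x v = 0) (m n : ℕ) :
    fderiv 𝕜 (fun y => f y ^ m * g y ^ n) x v = 0 := by
  rw [fderiv_fun_mul (by fun_prop) (by fun_prop), fderiv_fun_pow m hf, fderiv_fun_pow n hg]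
  simp [hfv, hgv]

theorem fderiv_sq_add_sq_apply {𝕜 ι : Type*} [NontriviallyNormedField 𝕜] [Fintype ι] (a b : ι)
    (x v : ι → 𝕜) :
    fderiv 𝕜 (fun y : ι → 𝕜 => y a ^ 2 + y b ^ 2) x v = 2 * (x a * v a + x b * v b) := by
  rw [fderiv_fun_add (by fun_prop) (by fun_prop), fderiv_fun_pow 2 (by fun_prop),
    fderiv_fun_pow 2 (by fun_prop)]
  simp only [(hasFDerivAt_apply a x).fderiv, (hasFDerivAt_apply b x).fderiv, add_apply, smul_apply,
    proj_apply, smul_eq_mul, nsmul_eq_mul]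
  ring

theorem bracket_eq_lieBracket (V W : (Fin 4 → ℝ) → (Fin 4 → ℝ)) :
    bracket V W = lieBracket ℝ W V :=
  rfl

noncomputable def theta0CLM (i : Fin 2) : (Fin 4 → ℝ) →L[ℝ] (Fin 4 → ℝ) :=
  if i = 0 then pi ![-(proj 1), proj 0, 0, 0] else pi ![0, 0, -(proj 3), proj 2]

theorem theta0CLM_apply (i : Fin 2) (x : Fin 4 → ℝ) : theta0CLM i x = Theta0 i x := by
  fin_cases i <;> funext p <;> fin_cases p <;> simp [theta0CLM, Theta0]

theorem theta0CLM_comm (i j : Fin 2) (x : Fin 4 → ℝ) :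
    theta0CLM i (theta0CLM j x) = theta0CLM j (theta0CLM i x) := by
  fin_cases i <;> fin_cases j <;> funext p <;> fin_cases p <;> simp [theta0CLM]

theorem Thmn_eq_smul_theta0CLM (i : Fin 2) (m n : ℕ) :
    Thmn i m n = fun x => Z m n x • theta0CLM i x := by
  simp only [theta0CLM_apply]
  rfl

theorem differentiable_Z (m n : ℕ) : Differentiable ℝ (Z m n) := by
  unfold Z
  fun_prop

theorem fderiv_Z_theta0CLM (m n : ℕ) (j : Fin 2) (x : Fin 4 → ℝ) :
    fderiv ℝ (Z m n) x (theta0CLM j x) = 0 := by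
  rw [theta0CLM_apply]
  apply fderiv_pow_mul_pow_apply_eq_zero (by fun_prop) (by fun_prop) <;>
    rw [fderiv_sq_add_sq_apply] <;> fin_cases j <;> simp [Theta0, mul_comm]

/-- [Θ^i_{m,n}, Θ^j_{k,l}] = 0. -/
theorem bracket_Thmn_Thmn (i j : Fin 2) (m n k l : ℕ) :
    bracket (Thmn i m n) (Thmn j k l) = 0 := by
  funext x
  rw [bracket_eq_lieBracket, Thmn_eq_smul_theta0CLM, Thmn_eq_smul_theta0CLM]
  exact lieBracket_smul_smul_continuousLinearMap_eq_zero (differentiable_Z k l x)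
    (differentiable_Z m n x) (theta0CLM_comm j i x) (fderiv_Z_theta0CLM k l i x)
    (fderiv_Z_theta0CLM m n j x)
end

section
/- For all i ∈ {1,2} and all nonnegative integers m, n, k, l, the Lie bracket of a rotational and an Eulerian vector field satisfies [Θ^i_{m,n}, E_{k,l}] = 2(m + n)·Θ^i_{m+k, n+l} as a map ℝ⁴ → ℝ⁴. -/
noncomputable def pr (j : Fin 4) : (Fin 4 → ℝ) →L[ℝ] ℝ :=
  ContinuousLinearMap.proj j

lemma fpow {f : (Fin 4 → ℝ) → ℝ} {f' : (Fin 4 → ℝ) →L[ℝ] ℝ} {x : Fin 4 → ℝ}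
    (hf : HasFDerivAt f f' x) (p : ℕ) :
    HasFDerivAt (fun y => f y ^ p) (((p : ℝ) * f x ^ (p - 1)) • f') x :=
  (hasDerivAt_pow p (f x)).comp_hasFDerivAt x hf

noncomputable def DZ (m n : ℕ) (x : Fin 4 → ℝ) : (Fin 4 → ℝ) →L[ℝ] ℝ :=
  ((x 0 ^ 2 + x 1 ^ 2) ^ m) •
      (((n : ℝ) * (x 2 ^ 2 + x 3 ^ 2) ^ (n - 1)) •
        (((2 : ℝ) * x 2 ^ (2 - 1)) • pr 2 + ((2 : ℝ) * x 3 ^ (2 - 1)) • pr 3)) +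
    ((x 2 ^ 2 + x 3 ^ 2) ^ n) •
      (((m : ℝ) * (x 0 ^ 2 + x 1 ^ 2) ^ (m - 1)) •
        (((2 : ℝ) * x 0 ^ (2 - 1)) • pr 0 + ((2 : ℝ) * x 1 ^ (2 - 1)) • pr 1))

lemma hasFDerivAt_Z (m n : ℕ) (x : Fin 4 → ℝ) :
    HasFDerivAt (Z m n) (DZ m n x) x := by
  have h0 : HasFDerivAt (fun y : Fin 4 → ℝ => y 0) (pr 0) x := (pr 0).hasFDerivAt
  have h1 : HasFDerivAt (fun y : Fin 4 → ℝ => y 1) (pr 1) x := (pr 1).hasFDerivAt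
  have h2 : HasFDerivAt (fun y : Fin 4 → ℝ => y 2) (pr 2) x := (pr 2).hasFDerivAt
  have h3 : HasFDerivAt (fun y : Fin 4 → ℝ => y 3) (pr 3) x := (pr 3).hasFDerivAt
  exact (fpow ((fpow h0 2).add (fpow h1 2)) m).mul (fpow ((fpow h2 2).add (fpow h3 2)) n)

noncomputable def Tc (i : Fin 2) : (Fin 4 → ℝ) →L[ℝ] (Fin 4 → ℝ) :=
  ContinuousLinearMap.pi (if i = 0 then ![-(pr 1), pr 0, 0, 0] else ![0, 0, -(pr 3), pr 2])

lemma Theta0_eq (i : Fin 2) : Theta0 i = ⇑(Tc i) := by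
  funext x
  fin_cases i <;> funext j <;> fin_cases j <;>
    simp [Theta0, Tc, pr, ContinuousLinearMap.pi_apply]

lemma hpow (p : ℕ) (r : ℝ) : (p : ℝ) * r ^ (p - 1) * r = p * r ^ p := by
  cases p with
  | zero => simp
  | succ q => push_cast; rw [pow_succ]; ring

lemma DZ_self (m n : ℕ) (x : Fin 4 → ℝ) :
    DZ m n x x = (2 * ((m : ℝ) + n)) * Z m n x := by
  simp only [DZ, Z, ContinuousLinearMap.add_apply, ContinuousLinearMap.smul_apply,
    pr, ContinuousLinearMap.proj_apply, smul_eq_mul, pow_one]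
  linear_combination (2 * (x 0 ^ 2 + x 1 ^ 2) ^ m) * hpow n (x 2 ^ 2 + x 3 ^ 2) +
    (2 * (x 2 ^ 2 + x 3 ^ 2) ^ n) * hpow m (x 0 ^ 2 + x 1 ^ 2)

lemma DZ_theta (m n : ℕ) (i : Fin 2) (x : Fin 4 → ℝ) :
    DZ m n x (Theta0 i x) = 0 := by
  fin_cases i <;>
    simp only [DZ, Theta0, ContinuousLinearMap.add_apply, ContinuousLinearMap.smul_apply,
      pr, ContinuousLinearMap.proj_apply, smul_eq_mul, pow_one] <;>
    simp <;> exact Or.inr (Or.inr (by ring))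

lemma Z_mul (m n k l : ℕ) (x : Fin 4 → ℝ) :
    Z k l x * Z m n x = Z (m + k) (n + l) x := by
  simp only [Z, pow_add]; ring

/-- [Θ^i_{m,n}, E_{k,l}] = 2(m+n)·Θ^i_{m+k,n+l}. -/
theorem bracket_Thmn_Emn (i : Fin 2) (m n k l : ℕ) :
    bracket (Thmn i m n) (Emn k l) =
      fun x => (2 * ((m : ℝ) + n)) • Thmn i (m + k) (n + l) x := by
  funext x
  have hT : HasFDerivAt (Theta0 i) (Tc i) x := by
    rw [Theta0_eq]; exact (Tc i).hasFDerivAt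
  have hTh : HasFDerivAt (Thmn i m n)
      (Z m n x • Tc i + (DZ m n x).smulRight (Theta0 i x)) x :=
    (hasFDerivAt_Z m n x).smul hT
  have hE : HasFDerivAt (Emn k l)
      (Z k l x • ContinuousLinearMap.id ℝ (Fin 4 → ℝ) + (DZ k l x).smulRight (E00 x)) x :=
    (hasFDerivAt_Z k l x).smul (hasFDerivAt_id x)
  show fderiv ℝ (Thmn i m n) x (Emn k l x) - fderiv ℝ (Emn k l) x (Thmn i m n x) = _
  rw [hTh.fderiv, hE.fderiv]
  simp only [ContinuousLinearMap.add_apply, ContinuousLinearMap.smul_apply,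
    ContinuousLinearMap.smulRight_apply, ContinuousLinearMap.id_apply,
    Emn, Thmn, E00, map_smul, (DZ m n x).map_smul, (DZ k l x).map_smul]
  rw [← Theta0_eq, DZ_self, DZ_theta, ← Z_mul m n k l x]
  module
end

section
/- The space 𝒱 of Eulerian-plus-rotational vector fields is closed under the Lie bracket: for all smooth (C^∞) functions f, g₁, g₂, f', g₁', g₂' : ℝ⁴ → ℝ, there exist smooth functions F, G₁, G₂ : ℝ⁴ → ℝ such that [ f·E₀₀ + g₁·Θ¹₀₀ + g₂·Θ²₀₀ , f'·E₀₀ + g₁'·Θ¹₀₀ + g₂'·Θ²₀₀ ] = F·E₀₀ + G₁·Θ¹₀₀ + G₂·Θ²₀₀ as maps ℝ⁴ → ℝ⁴. -/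
noncomputable def T1 : (Fin 4 → ℝ) →L[ℝ] (Fin 4 → ℝ) :=
  LinearMap.toContinuousLinearMap
  { toFun := fun x => ![-(x 1), x 0, 0, 0]
    map_add' := by intro x y; funext i; fin_cases i <;> simp <;> ring
    map_smul' := by intro c x; funext i; fin_cases i <;> simp <;> ring }

noncomputable def T2 : (Fin 4 → ℝ) →L[ℝ] (Fin 4 → ℝ) :=
  LinearMap.toContinuousLinearMap
  { toFun := fun x => ![0, 0, -(x 3), x 2]
    map_add' := by intro x y; funext i; fin_cases i <;> simp <;> ring
    map_smul' := by intro c x; funext i; fin_cases i <;> simp <;> ring }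

lemma theta0_eq_T1 : Theta0 0 = ⇑T1 := rfl
lemma theta0_eq_T2 : Theta0 1 = ⇑T2 := rfl

lemma T1_apply (y : Fin 4 → ℝ) : T1 y = ![-(y 1), y 0, 0, 0] := rfl
lemma T2_apply (y : Fin 4 → ℝ) : T2 y = ![0, 0, -(y 3), y 2] := rfl

lemma T1_T2 (x : Fin 4 → ℝ) : T1 (T2 x) = 0 := by
  funext i; fin_cases i <;> simp [T1_apply, T2_apply]

lemma T2_T1 (x : Fin 4 → ℝ) : T2 (T1 x) = 0 := by
  funext i; fin_cases i <;> simp [T1_apply, T2_apply]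

/-- Cancellation of the zeroth-order terms: the fields E₀₀, Θ¹₀₀, Θ²₀₀ pairwise commute. -/
lemma cancelQ (c1 c2 c3 d1 d2 d3 : ℝ) (x : Fin 4 → ℝ) :
    c1 • (d1 • E00 x + d2 • Theta0 0 x + d3 • Theta0 1 x)
      + c2 • T1 (d1 • E00 x + d2 • Theta0 0 x + d3 • Theta0 1 x)
      + c3 • T2 (d1 • E00 x + d2 • Theta0 0 x + d3 • Theta0 1 x)
    = d1 • (c1 • E00 x + c2 • Theta0 0 x + c3 • Theta0 1 x)
      + d2 • T1 (c1 • E00 x + c2 • Theta0 0 x + c3 • Theta0 1 x)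
      + d3 • T2 (c1 • E00 x + c2 • Theta0 0 x + c3 • Theta0 1 x) := by
  have hE : E00 x = x := rfl
  simp only [theta0_eq_T1, theta0_eq_T2, hE, map_add, map_smul, T1_T2 x, T2_T1 x,
    smul_zero]
  module

lemma hasFDerivAt_field (f g₁ g₂ : (Fin 4 → ℝ) → ℝ)
    (hf : ContDiff ℝ (⊤ : ℕ∞) f) (hg₁ : ContDiff ℝ (⊤ : ℕ∞) g₁) (hg₂ : ContDiff ℝ (⊤ : ℕ∞) g₂)
    (x : Fin 4 → ℝ) :
    HasFDerivAt (fun y => f y • E00 y + g₁ y • Theta0 0 y + g₂ y • Theta0 1 y)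
      ((f x • ContinuousLinearMap.id ℝ (Fin 4 → ℝ) + (fderiv ℝ f x).smulRight (E00 x)
        + (g₁ x • T1 + (fderiv ℝ g₁ x).smulRight (Theta0 0 x)))
        + (g₂ x • T2 + (fderiv ℝ g₂ x).smulRight (Theta0 1 x))) x := by
  have h1 : HasFDerivAt (fun y => f y • E00 y)
      (f x • ContinuousLinearMap.id ℝ (Fin 4 → ℝ) + (fderiv ℝ f x).smulRight (E00 x)) x :=
    ((hf.differentiable (by simp) x).hasFDerivAt).smul (hasFDerivAt_id x)
  have h2 : HasFDerivAt (fun y => g₁ y • Theta0 0 y)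
      (g₁ x • T1 + (fderiv ℝ g₁ x).smulRight (Theta0 0 x)) x :=
    ((hg₁.differentiable (by simp) x).hasFDerivAt).smul (T1.hasFDerivAt)
  have h3 : HasFDerivAt (fun y => g₂ y • Theta0 1 y)
      (g₂ x • T2 + (fderiv ℝ g₂ x).smulRight (Theta0 1 x)) x :=
    ((hg₂.differentiable (by simp) x).hasFDerivAt).smul (T2.hasFDerivAt)
  exact (h1.add h2).add h3

lemma contDiff_field (f g₁ g₂ : (Fin 4 → ℝ) → ℝ)
    (hf : ContDiff ℝ (⊤ : ℕ∞) f) (hg₁ : ContDiff ℝ (⊤ : ℕ∞) g₁) (hg₂ : ContDiff ℝ (⊤ : ℕ∞) g₂) :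
    ContDiff ℝ (⊤ : ℕ∞) (fun y => f y • E00 y + g₁ y • Theta0 0 y + g₂ y • Theta0 1 y) := by
  have hE : ContDiff ℝ (⊤ : ℕ∞) E00 := contDiff_id
  have h1 : ContDiff ℝ (⊤ : ℕ∞) (Theta0 0) := theta0_eq_T1 ▸ T1.contDiff
  have h2 : ContDiff ℝ (⊤ : ℕ∞) (Theta0 1) := theta0_eq_T2 ▸ T2.contDiff
  exact ((hf.smul hE).add (hg₁.smul h1)).add (hg₂.smul h2)

/-- the space 𝒱 = {f·E₀₀ + g₁·Θ¹₀₀ + g₂·Θ²₀₀} of Eulerian-plus-rotational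
vector fields with smooth coefficients is closed under the Lie bracket. -/
theorem eulerian_rotational_closed (f g₁ g₂ f' g₁' g₂' : (Fin 4 → ℝ) → ℝ)
    (hf : ContDiff ℝ (⊤ : ℕ∞) f) (hg₁ : ContDiff ℝ (⊤ : ℕ∞) g₁) (hg₂ : ContDiff ℝ (⊤ : ℕ∞) g₂)
    (hf' : ContDiff ℝ (⊤ : ℕ∞) f') (hg₁' : ContDiff ℝ (⊤ : ℕ∞) g₁') (hg₂' : ContDiff ℝ (⊤ : ℕ∞) g₂') :
    ∃ F G₁ G₂ : (Fin 4 → ℝ) → ℝ,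
      ContDiff ℝ (⊤ : ℕ∞) F ∧ ContDiff ℝ (⊤ : ℕ∞) G₁ ∧ ContDiff ℝ (⊤ : ℕ∞) G₂ ∧
      bracket (fun x => f x • E00 x + g₁ x • Theta0 0 x + g₂ x • Theta0 1 x)
              (fun x => f' x • E00 x + g₁' x • Theta0 0 x + g₂' x • Theta0 1 x) =
        fun x => F x • E00 x + G₁ x • Theta0 0 x + G₂ x • Theta0 1 x := by
  have hVc : ContDiff ℝ (⊤ : ℕ∞) (fun y => f y • E00 y + g₁ y • Theta0 0 y + g₂ y • Theta0 1 y) :=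
    contDiff_field f g₁ g₂ hf hg₁ hg₂
  have hWc : ContDiff ℝ (⊤ : ℕ∞) (fun y => f' y • E00 y + g₁' y • Theta0 0 y + g₂' y • Theta0 1 y) :=
    contDiff_field f' g₁' g₂' hf' hg₁' hg₂'
  have smooth_dir : ∀ (h : (Fin 4 → ℝ) → ℝ), ContDiff ℝ (⊤ : ℕ∞) h →
      ∀ (U : (Fin 4 → ℝ) → (Fin 4 → ℝ)), ContDiff ℝ (⊤ : ℕ∞) U →
      ContDiff ℝ (⊤ : ℕ∞) (fun x => fderiv ℝ h x (U x)) := by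
    intro h hh U hU
    exact (hh.fderiv_right (by simp)).clm_apply hU
  refine ⟨fun x => fderiv ℝ f x (f' x • E00 x + g₁' x • Theta0 0 x + g₂' x • Theta0 1 x)
            - fderiv ℝ f' x (f x • E00 x + g₁ x • Theta0 0 x + g₂ x • Theta0 1 x),
          fun x => fderiv ℝ g₁ x (f' x • E00 x + g₁' x • Theta0 0 x + g₂' x • Theta0 1 x)
            - fderiv ℝ g₁' x (f x • E00 x + g₁ x • Theta0 0 x + g₂ x • Theta0 1 x),
          fun x => fderiv ℝ g₂ x (f' x • E00 x + g₁' x • Theta0 0 x + g₂' x • Theta0 1 x)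
            - fderiv ℝ g₂' x (f x • E00 x + g₁ x • Theta0 0 x + g₂ x • Theta0 1 x),
          (smooth_dir f hf _ hWc).sub (smooth_dir f' hf' _ hVc),
          (smooth_dir g₁ hg₁ _ hWc).sub (smooth_dir g₁' hg₁' _ hVc),
          (smooth_dir g₂ hg₂ _ hWc).sub (smooth_dir g₂' hg₂' _ hVc), ?_⟩
  funext x
  have hV := hasFDerivAt_field f g₁ g₂ hf hg₁ hg₂ x
  have hW := hasFDerivAt_field f' g₁' g₂' hf' hg₁' hg₂' x
  simp only [bracket]
  rw [hV.fderiv, hW.fderiv]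
  simp only [ContinuousLinearMap.add_apply, ContinuousLinearMap.smul_apply,
    ContinuousLinearMap.smulRight_apply, ContinuousLinearMap.id_apply]
  have hQ := cancelQ (f x) (g₁ x) (g₂ x) (f' x) (g₁' x) (g₂' x) x
  set a : Fin 4 → ℝ := f x • E00 x + g₁ x • Theta0 0 x + g₂ x • Theta0 1 x with ha
  set b : Fin 4 → ℝ := f' x • E00 x + g₁' x • Theta0 0 x + g₂' x • Theta0 1 x with hb
  -- hQ : f x • b + g₁ x • T1 b + g₂ x • T2 b = f' x • a + g₁' x • T1 a + g₂' x • T2 a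
  rw [sub_smul, sub_smul, sub_smul]
  have key : ∀ (p q r p' q' r' : ℝ),
      (f x • b + p • E00 x + (g₁ x • T1 b + q • Theta0 0 x) + (g₂ x • T2 b + r • Theta0 1 x))
      - (f' x • a + p' • E00 x + (g₁' x • T1 a + q' • Theta0 0 x) + (g₂' x • T2 a + r' • Theta0 1 x))
      = (p • E00 x - p' • E00 x) + (q • Theta0 0 x - q' • Theta0 0 x)
        + (r • Theta0 1 x - r' • Theta0 1 x) := by
    intro p q r p' q' r'
    linear_combination (norm := module) hQ
  exact key _ _ _ _ _ _
end
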